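/- With P irreducible and t_j, s_0 as above, there exists a constant C_4 such that |t_j − s_0| < C_4/j for all sufficiently large j. -/

import Mathlib

/-!
Write `m_σ = q_{σ₁} p_σ`. For every solution `h` of the Poisson equation `h - P h = P G` (solvable
for `G` centred under `v`, since harmonic functions of an irreducible chain are constant),
`m_σ (∑ G along σ + h (last σ))` is a martingale on the tree of words. Optional stopping at the
finite stopping set `Λ_j` gives Wald's identity up to a bounded error:
`∑_{Λ_j} m_σ log m_σ = μ_P T_j + O(1)` and `∑_{Λ_j} m_σ log c_σ = μ_c T_j + O(1)`, where `T_j` is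
the expected stopping time and `μ_P / μ_c = s_0`. Every step costs a factor at least `p_min`, so
`T_j ≥ j`, whence `t_j = s_0 + O(1/j)`. `Λ_j` is finite because any `N` consecutive steps contain
one of probability `< 1`, unless all transitions are deterministic, in which case `Λ_j = ∅` and
`t_j = s_0 = 0`.
-/

open Finset

/-- Product of transition weights along a word (list of letters). -/
def pword {N : ℕ} (P : Matrix (Fin N) (Fin N) ℝ) (l : List (Fin N)) : ℝ :=
  ((l.zip l.tail).map fun ab => P ab.1 ab.2).prod

/-- Admissible word: nonempty with positive transition weights. -/
def adm {N : ℕ} (P : Matrix (Fin N) (Fin N) ℝ) (l : List (Fin N)) : Prop :=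
  l ≠ [] ∧ l.Chain' fun a b => 0 < P a b

/-- `m_σ = q_{σ_1} p_σ`. -/
def mlist {N : ℕ} (q : Fin N → ℝ) (P : Matrix (Fin N) (Fin N) ℝ)
    (l : List (Fin N)) : ℝ :=
  (l.map q).headI * pword P l

/-- Product of the entries of `A` along a word of length `k+1`. -/
noncomputable def wprod {N k : ℕ} (A : Matrix (Fin N) (Fin N) ℝ)
    (σ : Fin (k + 1) → Fin N) : ℝ :=
  ∏ t : Fin k, A (σ t.castSucc) (σ t.succ)

/-- `u_k = ∑_{σ ∈ G_k} m_σ log m_σ` (convention `0 log 0 = 0`). -/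
noncomputable def useq {N : ℕ} (q : Fin N → ℝ) (P : Matrix (Fin N) (Fin N) ℝ)
    (k : ℕ) : ℝ :=
  ∑ σ : Fin (k - 1 + 1) → Fin N,
    (q (σ 0) * wprod P σ) * Real.log (q (σ 0) * wprod P σ)

/-- `l_k = ∑_{σ ∈ G_k} m_σ log c_σ`. -/
noncomputable def lseq {N : ℕ} (q : Fin N → ℝ) (P c : Matrix (Fin N) (Fin N) ℝ)
    (k : ℕ) : ℝ :=
  ∑ σ : Fin (k - 1 + 1) → Fin N,
    (q (σ 0) * wprod P σ) * Real.log (wprod c σ)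

section Words

variable {α : Type*} [Fintype α] {β : Type*} [AddCommMonoid β]

def wordsUpTo (α : Type*) [Fintype α] [DecidableEq α] (M : ℕ) : Finset (List α) :=
  univ.image fun w : Σ n : Fin (M + 1), Fin n → α => List.ofFn w.2

lemma mem_wordsUpTo [DecidableEq α] {M : ℕ} {l : List α} : l ∈ wordsUpTo α M ↔ l.length ≤ M := by
  simp only [wordsUpTo, mem_image, mem_univ, true_and]
  constructor
  · rintro ⟨⟨n, g⟩, rfl⟩
    simpa using Nat.lt_succ_iff.1 n.2
  · intro hl
    exact ⟨⟨⟨l.length, Nat.lt_succ_of_le hl⟩, l.get⟩, List.ofFn_get l⟩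

lemma sum_wordsUpTo [DecidableEq α] (M : ℕ) (f : List α → β) :
    ∑ l ∈ wordsUpTo α M, f l = ∑ n ∈ range (M + 1), ∑ g : Fin n → α, f (List.ofFn g) := by
  rw [wordsUpTo, sum_image fun w _ w' _ h => by
    obtain ⟨hn, hg⟩ := Sigma.mk.inj_iff.1 (List.ofFn_inj'.1 h)
    exact Sigma.ext (Fin.ext hn) hg]
  rw [Fintype.sum_sigma]
  exact Fin.sum_univ_eq_sum_range (fun n => ∑ g : Fin n → α, f (List.ofFn g)) (M + 1)

lemma sum_ofFn_succ (n : ℕ) (f : List α → β) :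
    ∑ g : Fin (n + 1) → α, f (List.ofFn g) = ∑ g : Fin n → α, ∑ b, f (List.ofFn g ++ [b]) := by
  rw [← (Fin.snocEquiv fun _ => α).sum_comp, Fintype.sum_prod_type_right]
  refine sum_congr rfl fun g _ => sum_congr rfl fun b _ => ?_
  rw [List.ofFn_succ']
  simp [Fin.snocEquiv_apply]

section OptionalStopping

def levelSum (Φ : List α → ℝ) (p : List α → Prop) [DecidablePred p] (n : ℕ) : ℝ :=
  ∑ g : Fin n → α, if p (List.ofFn g) then Φ (List.ofFn g) else 0

lemma levelSum_eq_zero {Φ : List α → ℝ} (p : List α → Prop) [DecidablePred p] {n : ℕ}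
    (h : ∀ l : List α, l.length = n → ¬ p l) : levelSum Φ p n = 0 :=
  sum_eq_zero fun _ _ => if_neg (h _ (List.length_ofFn))

lemma sum_filter_wordsUpTo [DecidableEq α] (Φ : List α → ℝ) (p : List α → Prop) [DecidablePred p]
    (M : ℕ) :
    ∑ l ∈ (wordsUpTo α M).filter p, Φ l = ∑ n ∈ range (M + 1), levelSum Φ p n := by
  rw [sum_filter, sum_wordsUpTo]
  rfl

variable {alive stopped : List α → Prop} [DecidablePred alive] [DecidablePred stopped]
  {Φ : List α → ℝ}

lemma levelSum_alive_eq
    (hstop : ∀ l, stopped l → 2 ≤ l.length ∧ alive l.dropLast ∧ ¬ alive l)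
    (hprefix : ∀ l, 2 ≤ l.length → alive l → alive l.dropLast)
    (hzero : ∀ l, 2 ≤ l.length → alive l.dropLast → ¬ alive l → ¬ stopped l → Φ l = 0)
    (hharm : ∀ l, alive l → ∑ b, Φ (l ++ [b]) = Φ l) {n : ℕ} (hn : 1 ≤ n) :
    levelSum Φ alive n = levelSum Φ stopped (n + 1) + levelSum Φ alive (n + 1) := by
  have split : ∀ (l : List α) (b : α), l ≠ [] →
      (if alive l then Φ (l ++ [b]) else 0) = (if stopped (l ++ [b]) then Φ (l ++ [b]) else 0)
        + (if alive (l ++ [b]) then Φ (l ++ [b]) else 0) := by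
    intro l b hl
    have hlen : 2 ≤ (l ++ [b]).length := by
      simpa [Nat.one_le_iff_ne_zero] using hl
    have hstop' := hstop (l ++ [b])
    have hprefix' := hprefix (l ++ [b]) hlen
    have hzero' := hzero (l ++ [b]) hlen
    simp only [List.dropLast_concat] at hstop' hprefix' hzero'
    by_cases ha : alive l <;> by_cases hs : stopped (l ++ [b]) <;>
      by_cases ha' : alive (l ++ [b]) <;> simp_all
  unfold levelSum
  rw [sum_ofFn_succ n (fun l => if stopped l then Φ l else 0),
    sum_ofFn_succ n (fun l => if alive l then Φ l else 0), ← sum_add_distrib]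
  refine sum_congr rfl fun g _ => ?_
  have hg : List.ofFn g ≠ [] := by
    simpa [List.ofFn_eq_nil_iff] using Nat.one_le_iff_ne_zero.1 hn
  rw [← sum_add_distrib, ← sum_congr rfl fun b _ => split _ b hg]
  split_ifs with ha
  · exact (hharm _ ha).symm
  · exact sum_const_zero.symm

/-- `alive l`: the process has not stopped by the end of `l`; `stopped l`: it stops exactly at the
last letter of `l`. -/
theorem sum_stopped_eq_sum_singleton [DecidableEq α] {M : ℕ}
    (hsingle : ∀ a, alive [a]) (hlen : ∀ l, alive l → l.length < M)
    (hstop : ∀ l, stopped l → 2 ≤ l.length ∧ alive l.dropLast ∧ ¬ alive l)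
    (hprefix : ∀ l, 2 ≤ l.length → alive l → alive l.dropLast)
    (hzero : ∀ l, 2 ≤ l.length → alive l.dropLast → ¬ alive l → ¬ stopped l → Φ l = 0)
    (hharm : ∀ l, alive l → ∑ b, Φ (l ++ [b]) = Φ l) :
    ∑ l ∈ (wordsUpTo α M).filter stopped, Φ l = ∑ a, Φ [a] := by
  have hshort : ∀ n < 2, levelSum Φ stopped n = 0 := fun n hn =>
    levelSum_eq_zero _ fun l hl hl' => by have := (hstop l hl').1; omega
  have telescope : ∀ n, ∑ k ∈ range (n + 2), levelSum Φ stopped k + levelSum Φ alive (n + 1)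
      = levelSum Φ alive 1 := by
    intro n
    induction n with
    | zero => simp [sum_range_succ, hshort]
    | succ n ih =>
      rw [sum_range_succ, add_assoc,
        ← levelSum_alive_eq hstop hprefix hzero hharm (Nat.succ_pos n), ih]
  have hfirst : levelSum Φ alive 1 = ∑ a, Φ [a] := by
    refine Fintype.sum_equiv (Equiv.funUnique (Fin 1) α) _ _ fun g => ?_
    simp [List.ofFn_succ, hsingle]
  have hdead : levelSum Φ alive (M + 1) = 0 :=
    levelSum_eq_zero _ fun l hl hl' => by have := hlen l hl'; omega
  have hlate : levelSum Φ stopped (M + 1) = 0 := levelSum_eq_zero _ fun l hl hl' => by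
    have := hlen _ (hstop l hl').2.1
    rw [List.length_dropLast] at this
    omega
  rw [sum_filter_wordsUpTo, ← hfirst, ← telescope M, hdead, sum_range_succ _ (M + 1), hlate]
  simp

end OptionalStopping

end Words

def edgeSum {α : Type*} (G : α → α → ℝ) (l : List α) : ℝ :=
  ((l.zip l.tail).map fun ab => G ab.1 ab.2).sum

section EdgeSum

variable {α : Type*} (G : α → α → ℝ)

@[simp] lemma edgeSum_nil : edgeSum G [] = 0 := rfl

@[simp] lemma edgeSum_singleton (a : α) : edgeSum G [a] = 0 := rfl

@[simp] lemma edgeSum_cons_cons (a b : α) (l : List α) :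
    edgeSum G (a :: b :: l) = G a b + edgeSum G (b :: l) := by
  simp [edgeSum]

lemma edgeSum_append_singleton : ∀ (l : List α) (hl : l ≠ []) (b : α),
    edgeSum G (l ++ [b]) = edgeSum G l + G (l.getLast hl) b
  | [a], _, b => by simp
  | a :: c :: l, _, b => by
    have ih := edgeSum_append_singleton (c :: l) (List.cons_ne_nil c l) b
    rw [List.cons_append] at ih
    simp [ih, add_assoc]

lemma edgeSum_sub_const (r : ℝ) : ∀ l : List α,
    edgeSum (fun a b => G a b - r) l = edgeSum G l - (l.length - 1 : ℕ) * r
  | [] => by simp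
  | [a] => by simp
  | a :: b :: l => by
    simp only [edgeSum_cons_cons, edgeSum_sub_const r (b :: l), List.length_cons]
    push_cast [Nat.add_sub_cancel]
    ring

end EdgeSum

section WordWeight

variable {N : ℕ} (P : Matrix (Fin N) (Fin N) ℝ)

@[simp] lemma pword_nil : pword P [] = 1 := rfl

@[simp] lemma pword_singleton (a : Fin N) : pword P [a] = 1 := rfl

@[simp] lemma pword_cons_cons (a b : Fin N) (l : List (Fin N)) :
    pword P (a :: b :: l) = P a b * pword P (b :: l) := by
  simp [pword]

lemma pword_append_singleton : ∀ (l : List (Fin N)) (hl : l ≠ []) (b : Fin N),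
    pword P (l ++ [b]) = pword P l * P (l.getLast hl) b
  | [a], _, b => by simp
  | a :: c :: l, _, b => by
    have ih := pword_append_singleton (c :: l) (List.cons_ne_nil c l) b
    rw [List.cons_append] at ih
    simp [ih, mul_assoc]

variable {P}

lemma pword_nonneg (hP : ∀ i j, 0 ≤ P i j) : ∀ l, 0 ≤ pword P l
  | [] | [_] => by simp
  | a :: b :: l => by
    simpa using mul_nonneg (hP a b) (pword_nonneg hP (b :: l))

lemma pword_le_one (hP : ∀ i j, 0 ≤ P i j) (hP1 : ∀ i j, P i j ≤ 1) : ∀ l, pword P l ≤ 1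
  | [] | [_] => by simp
  | a :: b :: l => by
    simpa using mul_le_one₀ (hP1 a b) (pword_nonneg hP (b :: l)) (pword_le_one hP hP1 (b :: l))

lemma pword_pos : ∀ l : List (Fin N), l.IsChain (fun a b => 0 < P a b) → 0 < pword P l
  | [], _ | [_], _ => by simp
  | a :: b :: l, h => by
    rw [List.isChain_cons_cons] at h
    simpa using mul_pos h.1 (pword_pos (b :: l) h.2)

lemma log_pword : ∀ l : List (Fin N), l.IsChain (fun a b => 0 < P a b) →
    Real.log (pword P l) = edgeSum (fun a b => Real.log (P a b)) l
  | [], _ | [_], _ => by simp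
  | a :: b :: l, h => by
    rw [List.isChain_cons_cons] at h
    rw [pword_cons_cons, Real.log_mul h.1.ne' (pword_pos _ h.2).ne', log_pword _ h.2,
      edgeSum_cons_cons]

lemma pow_length_le_pword {p : ℝ} (hp : 0 ≤ p) (hpP : ∀ a b, 0 < P a b → p ≤ P a b) :
    ∀ l : List (Fin N), l.IsChain (fun a b => 0 < P a b) → p ^ (l.length - 1) ≤ pword P l
  | [], _ | [_], _ => by simp
  | a :: b :: l, h => by
    rw [List.isChain_cons_cons] at h
    have := pow_length_le_pword hp hpP (b :: l) h.2
    simp only [List.length_cons, Nat.add_sub_cancel, pword_cons_cons] at this ⊢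
    rw [pow_succ']
    exact mul_le_mul (hpP a b h.1) this (pow_nonneg hp _) h.1.le

lemma pword_append_le (hP : ∀ i j, 0 ≤ P i j) (hP1 : ∀ i j, P i j ≤ 1) :
    ∀ l₁ l₂ : List (Fin N), pword P (l₁ ++ l₂) ≤ pword P l₁ * pword P l₂
  | [], l₂ => by simp
  | [a], [] => by simp
  | [a], b :: l₂ => by
    simpa using mul_le_of_le_one_left (pword_nonneg hP _) (hP1 a b)
  | a :: b :: l₁, l₂ => by
    simpa [mul_assoc] using
      mul_le_mul_of_nonneg_left (pword_append_le hP hP1 (b :: l₁) l₂) (hP a b)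

lemma pword_le_pword_dropLast (hP : ∀ i j, 0 ≤ P i j) (hP1 : ∀ i j, P i j ≤ 1)
    (l : List (Fin N)) :
    pword P l ≤ pword P l.dropLast := by
  rcases List.eq_nil_or_concat l with rfl | ⟨l, b, rfl⟩
  · rfl
  · simpa using pword_append_le hP hP1 l [b]

lemma pword_eq_one (hdet : ∀ a b, 0 < P a b → P a b = 1) :
    ∀ l : List (Fin N), l.IsChain (fun a b => 0 < P a b) → pword P l = 1
  | [], _ | [_], _ => by simp
  | a :: b :: l, h => by
    rw [List.isChain_cons_cons] at h
    rw [pword_cons_cons, hdet a b h.1, pword_eq_one hdet _ h.2, mul_one]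

end WordWeight

section Markov

open Matrix Module

variable {ι : Type*} [Fintype ι] [DecidableEq ι] {P : Matrix ι ι ℝ}

lemma eq_zero_of_mem_rowStochastic_of_eq_one (hP : P ∈ rowStochastic ℝ ι) {x y z : ι}
    (hxy : P x y = 1) (hz : z ≠ y) : P x z = 0 := by
  have := sum_le_sum_of_subset_of_nonneg (subset_univ {z, y})
    fun w _ _ => nonneg_of_mem_rowStochastic hP (i := x) (j := w)
  rw [sum_pair hz, sum_row_of_mem_rowStochastic hP, hxy] at this
  exact le_antisymm (by linarith) (nonneg_of_mem_rowStochastic hP)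

lemma mem_of_pow_pos (hP : P ∈ rowStochastic ℝ ι) {A : Set ι}
    (hA : ∀ x ∈ A, ∃ y ∈ A, P x y = 1) (m : ℕ) {x z : ι} (hx : x ∈ A)
    (hxz : 0 < (P ^ m) x z) : z ∈ A := by
  induction m generalizing z with
  | zero =>
    by_cases h : x = z
    · exact h ▸ hx
    · simp [one_apply_ne h] at hxz
  | succ m ih =>
    rw [pow_succ, mul_apply, sum_pos_iff_of_nonneg fun w _ => mul_nonneg
      (pow_apply_nonneg (fun _ _ => nonneg_of_mem_rowStochastic hP) m x w)
      (nonneg_of_mem_rowStochastic hP)] at hxz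
    obtain ⟨w, -, hw⟩ := hxz
    have hw' := ih (pos_of_mul_pos_left hw (nonneg_of_mem_rowStochastic hP))
    obtain ⟨y, hy, hwy⟩ := hA w hw'
    by_contra hz
    have := eq_zero_of_mem_rowStochastic_of_eq_one hP hwy (ne_of_mem_of_not_mem hy hz).symm
    simp [this] at hw

theorem eq_one_of_pos_of_closed (hP : P ∈ rowStochastic ℝ ι) (hirr : P.IsIrreducible)
    {A : Set ι} (hne : A.Nonempty) (hA : ∀ x ∈ A, ∃ y ∈ A, P x y = 1) {a b : ι}
    (hab : 0 < P a b) : P a b = 1 := by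
  obtain ⟨x, hx⟩ := hne
  obtain ⟨m, -, hm⟩ := (isIrreducible_iff_exists_pow_pos hirr.nonneg).1 hirr x a
  obtain ⟨y, -, hay⟩ := hA a (mem_of_pow_pos hP hA m hx hm)
  by_cases hb : b = y
  · exact hb ▸ hay
  · exact absurd (eq_zero_of_mem_rowStochastic_of_eq_one hP hay hb) hab.ne'

theorem eq_of_mulVec_eq_self (hP : P ∈ rowStochastic ℝ ι) (hirr : P.IsIrreducible)
    {h : ι → ℝ} (hh : P *ᵥ h = h) (a b : ι) : h a = h b := by
  -- maximum principle at a maximiser `a₀` of `h`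
  obtain ⟨a₀, -, hmax⟩ := exists_max_image univ h ⟨a, mem_univ a⟩
  have hpow : ∀ m, (P ^ m) *ᵥ h = h := by
    intro m
    induction m with
    | zero => simp
    | succ m ih => rw [pow_succ, ← mulVec_mulVec, hh, ih]
  have hconst : ∀ z, h z = h a₀ := by
    intro z
    obtain ⟨m, -, hm⟩ := (isIrreducible_iff_exists_pow_pos hirr.nonneg).1 hirr a₀ z
    have hPm := pow_mem hP m
    have hzero : ∑ w, (P ^ m) a₀ w * (h a₀ - h w) = 0 := by
      simp only [mul_sub, sum_sub_distrib, ← sum_mul, sum_row_of_mem_rowStochastic hPm, one_mul]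
      rw [sub_eq_zero]
      exact (congrFun (hpow m) a₀).symm
    have := (sum_eq_zero_iff_of_nonneg fun w _ => mul_nonneg
      (nonneg_of_mem_rowStochastic hPm) (sub_nonneg.2 (hmax w (mem_univ w)))).1 hzero z
      (mem_univ z)
    rcases mul_eq_zero.1 this with h0 | h0
    · exact absurd h0 hm.ne'
    · linarith
  rw [hconst a, hconst b]

/-- Poisson equation: `range (1 - P)` lies in the kernel of `v` and has codimension one, because
`ker (1 - P)` consists of the constants. -/
theorem exists_sub_mulVec_eq (hP : P ∈ rowStochastic ℝ ι) (hirr : P.IsIrreducible)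
    {v : ι → ℝ} (hv : v ᵥ* P = v) (hv1 : ∑ i, v i = 1) {f : ι → ℝ} (hf : v ⬝ᵥ f = 0) :
    ∃ h, h - P *ᵥ h = f := by
  set T := (1 - P).mulVecLin
  set φ := dotProductEquiv ℝ ι v
  have hT : ∀ h, T h = h - P *ᵥ h := fun h => by simp [T]
  have hrange : LinearMap.range T ≤ LinearMap.ker φ := by
    rintro _ ⟨h, rfl⟩
    simp [φ, hT, dotProduct_sub, dotProduct_mulVec, hv]
  have hker : finrank ℝ (LinearMap.ker T) ≤ 1 := by
    have : LinearMap.ker T ≤ Submodule.span ℝ {1} := fun h hh => by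
      have hh' : P *ᵥ h = h := by rw [LinearMap.mem_ker, hT, sub_eq_zero] at hh; exact hh.symm
      obtain ⟨a⟩ : Nonempty ι := by
        by_contra hι
        simp [not_nonempty_iff.1 hι] at hv1
      refine Submodule.mem_span_singleton.2 ⟨h a, funext fun b => ?_⟩
      simp [eq_of_mulVec_eq_self hP hirr hh' a b]
    exact (Submodule.finrank_mono this).trans ((finrank_span_le_card _).trans (by simp))
  have hφ : LinearMap.range φ = ⊤ := LinearMap.range_eq_top.2 fun r =>
    ⟨fun _ => r, by simp [φ, dotProduct, ← sum_mul, hv1]⟩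
  have hrnT := LinearMap.finrank_range_add_finrank_ker T
  have hrnφ := LinearMap.finrank_range_add_finrank_ker φ
  rw [hφ, finrank_top, finrank_self] at hrnφ
  have heq := Submodule.eq_of_le_of_finrank_le hrange (by omega)
  obtain ⟨h, hh⟩ : f ∈ LinearMap.range T := heq ▸ by simpa [φ] using hf
  exact ⟨h, (hT h).symm.trans hh⟩

end Markov

section Cycles

variable {α : Type*} {R : α → α → Prop}

lemma exists_rel_of_isChain_append_singleton :
    ∀ {l : List α} {x : α}, (l ++ [x]).IsChain R → ∀ y ∈ l, ∃ z ∈ l ++ [x], R y z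
  | [], _, _, y, hy => absurd hy List.not_mem_nil
  | a :: l, x, h, y, hy => by
    obtain ⟨b, t, hbt⟩ : ∃ b t, l ++ [x] = b :: t := List.exists_cons_of_ne_nil (by simp)
    rw [List.cons_append, hbt, List.isChain_cons_cons] at h
    rcases List.mem_cons.1 hy with rfl | hy
    · exact ⟨b, by simp [hbt], h.1⟩
    · obtain ⟨z, hz, hyz⟩ := exists_rel_of_isChain_append_singleton (hbt ▸ h.2) y hy
      exact ⟨z, List.mem_cons_of_mem a hz, hyz⟩

lemma exists_closed_of_isChain_of_not_nodup :
    ∀ {l : List α}, l.IsChain R → ¬ l.Nodup → ∃ A : Set α, A.Nonempty ∧ ∀ x ∈ A, ∃ y ∈ A, R x y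
  | [], _, hn => absurd List.nodup_nil hn
  | x :: l, h, hn => by
    rw [List.nodup_cons, not_and_or, not_not] at hn
    rcases hn with hx | hn
    · obtain ⟨s, t, rfl⟩ := List.append_of_mem hx
      have hcyc : ((x :: s) ++ [x]).IsChain R := h.prefix ⟨t, by simp⟩
      refine ⟨{y | y ∈ x :: s}, ⟨x, List.mem_cons_self⟩, fun y hy => ?_⟩
      obtain ⟨z, hz, hyz⟩ := exists_rel_of_isChain_append_singleton hcyc y hy
      rw [List.mem_append, List.mem_singleton] at hz
      exact ⟨z, hz.elim id fun hzx => hzx ▸ List.mem_cons_self, hyz⟩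
    · exact exists_closed_of_isChain_of_not_nodup h.tail hn

end Cycles

section Decay

open Matrix

variable {N : ℕ} {P : Matrix (Fin N) (Fin N) ℝ} {p : ℝ}

lemma isChain_eq_one_of_lt_pword (hP : P ∈ rowStochastic ℝ (Fin N))
    (hp : ∀ a b, 0 < P a b → P a b < 1 → P a b ≤ p) :
    ∀ l : List (Fin N), l.IsChain (fun a b => 0 < P a b) → p < pword P l →
      l.IsChain (fun a b => P a b = 1)
  | [], _, _ | [_], _, _ => by simp
  | a :: b :: l, h, hlt => by
    rw [List.isChain_cons_cons] at h ⊢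
    rw [pword_cons_cons] at hlt
    have hnn : ∀ i j, 0 ≤ P i j := fun _ _ => nonneg_of_mem_rowStochastic hP
    have hle := pword_le_one hnn (fun _ _ => le_one_of_mem_rowStochastic hP) (b :: l)
    have hab : P a b = 1 := by
      by_contra hab
      have := hp a b h.1 (lt_of_le_of_ne (le_one_of_mem_rowStochastic hP) hab)
      nlinarith [pword_nonneg hnn (b :: l)]
    exact ⟨hab, isChain_eq_one_of_lt_pword hP hp (b :: l) h.2 (by simpa [hab] using hlt)⟩

/-- More than `N` letters joined by probability-one steps would repeat a letter and close a
deterministic cycle, which irreducibility spreads to the whole chain. -/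
lemma pword_le_of_card_lt_length (hP : P ∈ rowStochastic ℝ (Fin N)) (hirr : P.IsIrreducible)
    {a b : Fin N} (hab : 0 < P a b) (hab1 : P a b < 1)
    (hp : ∀ a b, 0 < P a b → P a b < 1 → P a b ≤ p) {l : List (Fin N)}
    (hl : l.IsChain (fun a b => 0 < P a b)) (hlen : N < l.length) : pword P l ≤ p := by
  by_contra! hlt
  have hnodup : ¬ l.Nodup := fun hn => by
    have := hn.length_le_card
    simp at this
    omega
  obtain ⟨A, hA, hclosed⟩ := exists_closed_of_isChain_of_not_nodup
    (isChain_eq_one_of_lt_pword hP hp l hl hlt) hnodup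
  exact hab1.ne (eq_one_of_pos_of_closed hP hirr hA hclosed hab)

lemma pword_le_pow_div (hP : P ∈ rowStochastic ℝ (Fin N)) (hirr : P.IsIrreducible)
    {a b : Fin N} (hab : 0 < P a b) (hab1 : P a b < 1) (hp0 : 0 ≤ p)
    (hp : ∀ a b, 0 < P a b → P a b < 1 → P a b ≤ p) (l : List (Fin N))
    (hl : l.IsChain (fun a b => 0 < P a b)) : pword P l ≤ p ^ (l.length / (N + 1)) := by
  have hnn : ∀ i j, 0 ≤ P i j := fun _ _ => nonneg_of_mem_rowStochastic hP
  by_cases hlen : l.length < N + 1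
  · rw [Nat.div_eq_of_lt hlen, pow_zero]
    exact pword_le_one hnn (fun _ _ => le_one_of_mem_rowStochastic hP) l
  have htake := pword_le_of_card_lt_length hP hirr hab hab1 hp (hl.take (N + 1))
    (by simp; omega)
  have hdrop := pword_le_pow_div hP hirr hab hab1 hp0 hp (l.drop (N + 1)) (hl.drop _)
  rw [List.length_drop] at hdrop
  calc pword P l = pword P (l.take (N + 1) ++ l.drop (N + 1)) := by
        rw [List.take_append_drop]
    _ ≤ pword P (l.take (N + 1)) * pword P (l.drop (N + 1)) :=
      pword_append_le hnn (fun _ _ => le_one_of_mem_rowStochastic hP) _ _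
    _ ≤ p * p ^ ((l.length - (N + 1)) / (N + 1)) :=
      mul_le_mul htake hdrop (pword_nonneg hnn _) hp0
    _ = p ^ (l.length / (N + 1)) := by
      rw [← pow_succ', Nat.div_eq_sub_div (Nat.succ_pos N) (by omega : N + 1 ≤ l.length)]
termination_by l.length
decreasing_by simp; omega

theorem exists_length_bound (hP : P ∈ rowStochastic ℝ (Fin N)) (hirr : P.IsIrreducible)
    {a b : Fin N} (hab : 0 < P a b) (hab1 : P a b < 1) {ε : ℝ} (hε : 0 < ε) :
    ∃ M, ∀ l : List (Fin N), l.IsChain (fun a b => 0 < P a b) → ε ≤ pword P l →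
      l.length < M := by
  obtain ⟨p, hp0, hp1, hp⟩ :
      ∃ p : ℝ, 0 ≤ p ∧ p < 1 ∧ ∀ a b, 0 < P a b → P a b < 1 → P a b ≤ p := by
    obtain ⟨⟨a₀, b₀⟩, hmem, hmax⟩ := exists_max_image
      (univ.filter fun x : Fin N × Fin N => P x.1 x.2 < 1) (fun x => P x.1 x.2)
      ⟨(a, b), by simpa using hab1⟩
    exact ⟨P a₀ b₀, nonneg_of_mem_rowStochastic hP, (mem_filter.1 hmem).2,
      fun a b _ h => hmax (a, b) (by simpa using h)⟩
  obtain ⟨K, hK⟩ := exists_pow_lt_of_lt_one hε hp1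
  refine ⟨K * (N + 1), fun l hl hεl => ?_⟩
  by_contra! hlen
  have hKle : K ≤ l.length / (N + 1) := (Nat.le_div_iff_mul_le (by omega)).2 hlen
  have := pword_le_pow_div hP hirr hab hab1 hp0 hp l hl
  have := pow_le_pow_of_le_one hp0 hp1.le hKle
  linarith

end Decay

section Ends

variable {α : Type*} [Fintype α] (f : α → ℝ)

lemma abs_headI_map_le (l : List α) : |(l.map f).headI| ≤ ∑ a, |f a| := by
  cases l with
  | nil => exact (abs_zero (α := ℝ)).trans_le (sum_nonneg fun a _ => abs_nonneg (f a))
  | cons a l => simpa using single_le_sum (fun b _ => abs_nonneg (f b)) (mem_univ a)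

lemma abs_getLastD_map_le (l : List α) : |(l.map f).getLastD 0| ≤ ∑ a, |f a| := by
  rcases List.eq_nil_or_concat l with rfl | ⟨l, b, rfl⟩
  · simpa using sum_nonneg fun a _ => abs_nonneg (f a)
  · simpa using single_le_sum (fun b _ => abs_nonneg (f b)) (mem_univ b)

end Ends

section Admissible

variable {N : ℕ} {P : Matrix (Fin N) (Fin N) ℝ} {l : List (Fin N)}

lemma adm_dropLast (hl : adm P l) (h2 : 2 ≤ l.length) : adm P l.dropLast :=
  ⟨fun h => by have := congrArg List.length h; simp at this; omega,
    hl.2.prefix (List.dropLast_prefix l)⟩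

lemma adm_append_singleton (hl : adm P l) {b : Fin N} (hb : 0 < P (l.getLast hl.1) b) :
    adm P (l ++ [b]) :=
  ⟨by simp, List.isChain_append.2 ⟨hl.2, List.isChain_singleton b, fun x hx y hy => by
    simp_all [List.getLast?_eq_some_getLast hl.1]⟩⟩

variable {q : Fin N → ℝ}

@[simp] lemma mlist_nil : mlist q P [] = 0 := zero_mul _

lemma mlist_append_singleton (hl : l ≠ []) (b : Fin N) :
    mlist q P (l ++ [b]) = mlist q P l * P (l.getLast hl) b := by
  obtain ⟨a, t, rfl⟩ := List.exists_cons_of_ne_nil hl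
  rw [mlist, mlist, pword_append_singleton P _ hl]
  simp [mul_assoc]

lemma mlist_nonneg (hq : ∀ i, 0 ≤ q i) (hP : ∀ i j, 0 ≤ P i j) (l : List (Fin N)) :
    0 ≤ mlist q P l := by
  cases l with
  | nil => simp
  | cons a l => exact mul_nonneg (hq a) (pword_nonneg hP _)

lemma mlist_eq_zero_of_not_adm (hP : ∀ i j, 0 ≤ P i j) (hd : adm P l.dropLast)
    (hl : ¬ adm P l) : mlist q P l = 0 := by
  have hne : l ≠ [] := by rintro rfl; exact hd.1 rfl
  rw [← List.dropLast_append_getLast hne] at hl ⊢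
  have hzero : P (l.dropLast.getLast hd.1) (l.getLast hne) = 0 := by
    by_contra hpos
    exact hl (adm_append_singleton hd ((hP _ _).lt_of_ne' hpos))
  rw [mlist_append_singleton hd.1, hzero, mul_zero]

lemma log_mlist (hq : ∀ i, 0 < q i) (hl : adm P l) :
    Real.log (mlist q P l) =
      (l.map fun a => Real.log (q a)).headI + edgeSum (fun a b => Real.log (P a b)) l := by
  obtain ⟨a, t, rfl⟩ := List.exists_cons_of_ne_nil hl.1
  rw [mlist, List.map_cons, List.headI_cons, Real.log_mul (hq a).ne' (pword_pos _ hl.2).ne',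
    log_pword _ hl.2, List.map_cons, List.headI_cons]

end Admissible

section Stopping

open Matrix

variable {N : ℕ} {q : Fin N → ℝ} {P : Matrix (Fin N) (Fin N) ℝ}

/-- `mlist q P σ * (edgeSum G σ + h (last σ))` is a martingale along the chain `P` started from
`q` whenever `(G, h)` solves the Poisson equation; `F` is a stopping set if optional stopping
holds at `F` for all of these martingales. -/
def IsStoppingSet (q : Fin N → ℝ) (P : Matrix (Fin N) (Fin N) ℝ) (F : Finset (List (Fin N))) :
    Prop :=
  ∀ (G : Fin N → Fin N → ℝ) (h : Fin N → ℝ), (fun a => ∑ b, P a b * G a b) = h - P *ᵥ h →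
    ∑ σ ∈ F, mlist q P σ * (edgeSum G σ + (σ.map h).getLastD 0) = ∑ a, q a * h a

lemma sum_mlist_append_singleton_mul (hP : P ∈ rowStochastic ℝ (Fin N))
    {G : Fin N → Fin N → ℝ} {h : Fin N → ℝ} (hGh : (fun a => ∑ b, P a b * G a b) = h - P *ᵥ h)
    {l : List (Fin N)} (hl : l ≠ []) :
    ∑ b, mlist q P (l ++ [b]) * (edgeSum G (l ++ [b]) + ((l ++ [b]).map h).getLastD 0)
      = mlist q P l * (edgeSum G l + (l.map h).getLastD 0) := by
  have hlast : (l.map h).getLastD 0 = h (l.getLast hl) := by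
    conv_lhs => rw [← List.dropLast_append_getLast hl]
    simp
  have hG := congrFun hGh (l.getLast hl)
  simp only [Pi.sub_apply, mulVec, dotProduct] at hG
  set x := l.getLast hl
  simp only [mlist_append_singleton hl, edgeSum_append_singleton G l hl, List.map_append,
    List.map_cons, List.map_nil, List.getLastD_concat, hlast]
  calc ∑ b, mlist q P l * P x b * (edgeSum G l + G x b + h b)
      = ∑ b, mlist q P l * (edgeSum G l * P x b + P x b * G x b + P x b * h b) :=
        sum_congr rfl fun b _ => by ring
    _ = mlist q P l * (edgeSum G l * ∑ b, P x b + ∑ b, P x b * G x b + ∑ b, P x b * h b) := by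
        rw [← mul_sum, sum_add_distrib, sum_add_distrib, ← mul_sum]
    _ = mlist q P l * (edgeSum G l + h x) := by
        rw [sum_row_of_mem_rowStochastic hP, hG]
        ring

theorem exists_isStoppingSet (hP : P ∈ rowStochastic ℝ (Fin N)) (hirr : P.IsIrreducible)
    {a b : Fin N} (hab : 0 < P a b) (hab1 : P a b < 1) (q : Fin N → ℝ) {ε : ℝ} (hε0 : 0 < ε)
    (hε1 : ε ≤ 1) :
    ∃ F : Finset (List (Fin N)),
      (F : Set (List (Fin N))) = {l | adm P l ∧ ε ≤ pword P l.dropLast ∧ pword P l < ε} ∧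
      IsStoppingSet q P F := by
  classical
  have hnn : ∀ i j, 0 ≤ P i j := fun _ _ => nonneg_of_mem_rowStochastic hP
  have hle1 : ∀ i j, P i j ≤ 1 := fun _ _ => le_one_of_mem_rowStochastic hP
  obtain ⟨M, hM⟩ := exists_length_bound hP hirr hab hab1 hε0
  set alive : List (Fin N) → Prop := fun l => adm P l ∧ ε ≤ pword P l
  set stopped : List (Fin N) → Prop :=
    fun l => adm P l ∧ ε ≤ pword P l.dropLast ∧ pword P l < ε
  have hprefix : ∀ l, 2 ≤ l.length → alive l → alive l.dropLast := fun l h2 hl =>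
    ⟨adm_dropLast hl.1 h2, hl.2.trans (pword_le_pword_dropLast hnn hle1 l)⟩
  have hstop : ∀ l, stopped l → 2 ≤ l.length ∧ alive l.dropLast ∧ ¬ alive l := by
    rintro l ⟨hl, hd, hlt⟩
    have h2 : 2 ≤ l.length := by
      match l, hl with
      | [_], _ => simp at hlt; linarith
      | _ :: _ :: _, _ => simp
    exact ⟨h2, ⟨adm_dropLast hl h2, hd⟩, fun h => (h.2.trans_lt hlt).false⟩
  refine ⟨(wordsUpTo _ M).filter stopped, ?_, fun G h hGh => ?_⟩
  · ext l
    simp only [coe_filter, mem_wordsUpTo]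
    refine and_iff_right_of_imp fun hl => ?_
    have := hM _ (hstop l hl).2.1.1.2 (hstop l hl).2.1.2
    rw [List.length_dropLast] at this
    omega
  refine (sum_stopped_eq_sum_singleton (alive := alive)
    (fun a => ⟨⟨List.cons_ne_nil a [], List.isChain_singleton a⟩, by simpa using hε1⟩)
    (fun l hl => hM l hl.1.2 hl.2) hstop hprefix (fun l _ hd hna hns => ?_)
    (fun l hl => sum_mlist_append_singleton_mul hP hGh hl.1.1)).trans (by simp [mlist])
  refine (mul_eq_zero_of_left (mlist_eq_zero_of_not_adm hnn hd.1 fun hl => ?_) _)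
  rcases lt_or_ge (pword P l) ε with hlt | hge
  · exact hns ⟨hl, hd.2, hlt⟩
  · exact hna ⟨hl, hge⟩

end Stopping

section Wald

open Matrix

variable {N : ℕ} {q : Fin N → ℝ} {P : Matrix (Fin N) (Fin N) ℝ} {F : Finset (List (Fin N))}

def expectedSteps (q : Fin N → ℝ) (P : Matrix (Fin N) (Fin N) ℝ) (F : Finset (List (Fin N))) :
    ℝ :=
  ∑ σ ∈ F, mlist q P σ * ((σ.length - 1 : ℕ) : ℝ)

lemma IsStoppingSet.sum_mlist (hP : P ∈ rowStochastic ℝ (Fin N)) (hF : IsStoppingSet q P F) :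
    ∑ σ ∈ F, mlist q P σ = ∑ a, q a := by
  have hmass := hF (fun _ _ => 0) 1
    (by ext a; simp [mulVec, dotProduct, sum_row_of_mem_rowStochastic hP])
  calc ∑ σ ∈ F, mlist q P σ
      = ∑ σ ∈ F, mlist q P σ * (edgeSum (fun _ _ => 0) σ + (σ.map 1).getLastD 0) := by
        refine sum_congr rfl fun σ _ => ?_
        rcases List.eq_nil_or_concat σ with rfl | ⟨σ, b, rfl⟩
        · simp
        · simp [edgeSum]
    _ = ∑ a, q a := by simpa using hmass

lemma IsStoppingSet.abs_sum_mlist_mul_le (hP : P ∈ rowStochastic ℝ (Fin N))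
    (hq : ∀ i, 0 ≤ q i) (hF : IsStoppingSet q P F) {x : List (Fin N) → ℝ} {H : ℝ}
    (hx : ∀ σ ∈ F, |x σ| ≤ H) : |∑ σ ∈ F, mlist q P σ * x σ| ≤ (∑ a, q a) * H := by
  have hm := mlist_nonneg (P := P) hq fun _ _ => nonneg_of_mem_rowStochastic hP
  calc |∑ σ ∈ F, mlist q P σ * x σ| ≤ ∑ σ ∈ F, mlist q P σ * H := by
        refine (abs_sum_le_sum_abs _ _).trans (sum_le_sum fun σ hσ => ?_)
        rw [abs_mul, abs_of_nonneg (hm σ)]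
        exact mul_le_mul_of_nonneg_left (hx σ hσ) (hm σ)
    _ = (∑ a, q a) * H := by rw [← sum_mul, hF.sum_mlist hP]

lemma IsStoppingSet.le_expectedSteps (hP : P ∈ rowStochastic ℝ (Fin N)) (hq : ∀ i, 0 ≤ q i)
    (hF : IsStoppingSet q P F) {k : ℕ} (hk : ∀ σ ∈ F, k ≤ σ.length - 1) :
    (∑ a, q a) * k ≤ expectedSteps q P F := by
  rw [← hF.sum_mlist hP, sum_mul]
  exact sum_le_sum fun σ hσ => mul_le_mul_of_nonneg_left (by exact_mod_cast hk σ hσ)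
    (mlist_nonneg (P := P) hq (fun _ _ => nonneg_of_mem_rowStochastic hP) σ)

/-- Wald's identity with bounded error, by optional stopping for the Poisson solution of the
centred increments `φ - μ`. -/
theorem exists_abs_sum_mlist_mul_sub_le (hP : P ∈ rowStochastic ℝ (Fin N))
    (hirr : P.IsIrreducible) {v : Fin N → ℝ} (hv : v ᵥ* P = v) (hv1 : ∑ i, v i = 1)
    (hq : ∀ i, 0 ≤ q i) (φ : Fin N → Fin N → ℝ) {X : List (Fin N) → ℝ} {D : ℝ}
    (hX : ∀ l, adm P l → |X l - edgeSum φ l| ≤ D) :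
    ∃ C, ∀ F, IsStoppingSet q P F → (∀ σ ∈ F, adm P σ) →
      |∑ σ ∈ F, mlist q P σ * X σ - (∑ i, v i * ∑ j, P i j * φ i j) * expectedSteps q P F|
        ≤ C := by
  set μ := ∑ i, v i * ∑ j, P i j * φ i j
  have hcentered : v ⬝ᵥ (fun a => ∑ b, P a b * (φ a b - μ)) = 0 := by
    simp only [dotProduct, mul_sub, sum_sub_distrib, ← sum_mul, sum_row_of_mem_rowStochastic hP,
      one_mul, mul_sub, ← sum_mul, hv1]
    ring
  obtain ⟨h, hh⟩ := exists_sub_mulVec_eq hP hirr hv hv1 hcentered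
  refine ⟨(∑ a, q a) * D + |∑ a, q a * h a| + (∑ a, q a) * ∑ a, |h a|, fun F hF hadm => ?_⟩
  have hopt := hF (fun a b => φ a b - μ) h hh.symm
  simp only [edgeSum_sub_const] at hopt
  have key : ∑ σ ∈ F, mlist q P σ * X σ - μ * expectedSteps q P F
      = ∑ σ ∈ F, mlist q P σ * (X σ - edgeSum φ σ) + ∑ a, q a * h a
        - ∑ σ ∈ F, mlist q P σ * (σ.map h).getLastD 0 := by
    rw [← hopt, expectedSteps, mul_sum, ← sum_sub_distrib, ← sum_add_distrib, ← sum_sub_distrib]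
    exact sum_congr rfl fun σ _ => by ring
  rw [key]
  refine (abs_sub _ _).trans (add_le_add ((abs_add_le _ _).trans (add_le_add ?_ le_rfl)) ?_)
  · exact hF.abs_sum_mlist_mul_le hP hq fun σ hσ => hX σ (hadm σ hσ)
  · exact hF.abs_sum_mlist_mul_le hP hq fun σ _ => abs_getLastD_map_le h σ

theorem exists_abs_sum_mlist_mul_log_mlist_sub_le (hP : P ∈ rowStochastic ℝ (Fin N))
    (hirr : P.IsIrreducible) {v : Fin N → ℝ} (hv : v ᵥ* P = v) (hv1 : ∑ i, v i = 1)
    (hq : ∀ i, 0 < q i) :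
    ∃ C, ∀ F, IsStoppingSet q P F → (∀ σ ∈ F, adm P σ) →
      |∑ σ ∈ F, mlist q P σ * Real.log (mlist q P σ)
        - (∑ i, v i * ∑ j, P i j * Real.log (P i j)) * expectedSteps q P F| ≤ C :=
  exists_abs_sum_mlist_mul_sub_le hP hirr hv hv1 (fun i => (hq i).le) _ fun l hl => by
    rw [log_mlist hq hl, add_sub_cancel_right]
    exact abs_headI_map_le _ l

theorem exists_abs_sum_mlist_mul_log_pword_sub_le (hP : P ∈ rowStochastic ℝ (Fin N))
    (hirr : P.IsIrreducible) {v : Fin N → ℝ} (hv : v ᵥ* P = v) (hv1 : ∑ i, v i = 1)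
    (hq : ∀ i, 0 ≤ q i) {c : Matrix (Fin N) (Fin N) ℝ} (hc : ∀ i j, 0 < P i j → 0 < c i j) :
    ∃ C, ∀ F, IsStoppingSet q P F → (∀ σ ∈ F, adm P σ) →
      |∑ σ ∈ F, mlist q P σ * Real.log (pword c σ)
        - (∑ i, v i * ∑ j, P i j * Real.log (c i j)) * expectedSteps q P F| ≤ C :=
  exists_abs_sum_mlist_mul_sub_le hP hirr hv hv1 hq _ (D := 0) fun l hl => by
    rw [log_pword l (hl.2.imp fun a b h => hc a b h), sub_self, abs_zero]

/-- A path of probability at least `p ^ (length - 1)` needs more than `j` steps to fall below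
`p ^ j`. -/
lemma IsStoppingSet.natCast_le_expectedSteps (hP : P ∈ rowStochastic ℝ (Fin N))
    (hq : ∀ i, 0 ≤ q i) (hq1 : ∑ i, q i = 1) (hF : IsStoppingSet q P F) {p : ℝ} (hp0 : 0 ≤ p)
    (hp1 : p ≤ 1) (hpP : ∀ a b, 0 < P a b → p ≤ P a b) {j : ℕ}
    (hFj : ∀ σ ∈ F, adm P σ ∧ pword P σ < p ^ j) : (j : ℝ) ≤ expectedSteps q P F := by
  have := hF.le_expectedSteps hP hq (k := j) fun σ hσ => by
    by_contra! h
    have := pow_length_le_pword hp0 hpP σ (hFj σ hσ).1.2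
    have := pow_le_pow_of_le_one hp0 hp1 h.le
    linarith [(hFj σ hσ).2]
  rwa [hq1, one_mul] at this

end Wald

lemma abs_div_sub_div_le {x y s l T A B : ℝ} (hx : |x - s * T| ≤ A) (hy : |y - l * T| ≤ B)
    (hl : l ≠ 0) (hT : 0 < T) (hBT : 2 * B ≤ |l| * T) :
    |x / y - s / l| ≤ 2 * (|l| * A + |s| * B) / l ^ 2 / T := by
  have hy' : |l| * T / 2 ≤ |y| := by
    have := abs_sub_abs_le_abs_sub (l * T) y
    rw [abs_mul, abs_of_pos hT, abs_sub_comm] at this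
    linarith
  have hy0 : y ≠ 0 := abs_pos.1 (by nlinarith [abs_pos.2 hl])
  have hnum : |l * (x - s * T) - s * (y - l * T)| ≤ |l| * A + |s| * B := by
    refine (abs_sub _ _).trans (add_le_add ?_ ?_) <;> rw [abs_mul]
    · exact mul_le_mul_of_nonneg_left hx (abs_nonneg l)
    · exact mul_le_mul_of_nonneg_left hy (abs_nonneg s)
  calc |x / y - s / l| = |l * (x - s * T) - s * (y - l * T)| / (|l| * |y|) := by
        rw [div_sub_div _ _ hy0 hl, abs_div, abs_mul, mul_comm |y|]
        congr 2
        ring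
    _ ≤ (|l| * A + |s| * B) / (|l| * (|l| * T / 2)) :=
        div_le_div₀ ((abs_nonneg _).trans hnum) hnum (by positivity)
          (mul_le_mul_of_nonneg_left hy' (abs_nonneg l))
    _ = 2 * (|l| * A + |s| * B) / l ^ 2 / T := by
        rw [← sq_abs l]
        field_simp

lemma abs_div_sub_div_lt {x y s l T A B : ℝ} {j : ℕ} (hx : |x - s * T| ≤ A)
    (hy : |y - l * T| ≤ B) (hl : l ≠ 0) (hjT : (j : ℝ) ≤ T) (hj : ⌈2 * B / |l|⌉₊ < j) :
    |x / y - s / l| < (2 * (|l| * A + |s| * B) / l ^ 2 + 1) / j := by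
  have hj0 : (0 : ℝ) < j := by exact_mod_cast (Nat.zero_le _).trans_lt hj
  have hBT : 2 * B ≤ |l| * T := by
    have := (Nat.le_ceil _).trans (Nat.cast_le.2 hj.le)
    rw [div_le_iff₀' (abs_pos.2 hl)] at this
    exact this.trans (mul_le_mul_of_nonneg_left hjT (abs_nonneg l))
  have hA := (abs_nonneg _).trans hx
  have hB := (abs_nonneg _).trans hy
  refine (abs_div_sub_div_le hx hy hl (hj0.trans_le hjT) hBT).trans_lt
    ((div_le_div_of_nonneg_left (by positivity) hj0 hjT).trans_lt
      (div_lt_div_of_pos_right (lt_add_one _) hj0))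

section Entries

open Matrix

variable {ι : Type*} [Fintype ι] [DecidableEq ι] {P : Matrix ι ι ℝ}

lemma exists_pos_of_mem_rowStochastic (hP : P ∈ rowStochastic ℝ ι) (i : ι) : ∃ j, 0 < P i j := by
  obtain ⟨j, -, hj⟩ := (sum_pos_iff_of_nonneg fun j _ => nonneg_of_mem_rowStochastic hP).1
    ((sum_row_of_mem_rowStochastic hP i).symm ▸ one_pos : 0 < ∑ j, P i j)
  exact ⟨j, hj⟩

lemma sInf_pos_entries (hP : P ∈ rowStochastic ℝ ι) [Nonempty ι] {pmin : ℝ}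
    (hpmin : pmin = sInf {x : ℝ | ∃ i j, 0 < P i j ∧ P i j = x}) :
    0 < pmin ∧ pmin ≤ 1 ∧ ∀ a b, 0 < P a b → pmin ≤ P a b := by
  set S := {x : ℝ | ∃ i j, 0 < P i j ∧ P i j = x}
  have hfin : S.Finite := (Set.finite_range fun ij : ι × ι => P ij.1 ij.2).subset
    fun _ ⟨i, j, _, hx⟩ => ⟨(i, j), hx⟩
  obtain ⟨i⟩ := ‹Nonempty ι›
  obtain ⟨j, hj⟩ := exists_pos_of_mem_rowStochastic hP i
  have hmem : sInf S ∈ S := Set.Nonempty.csInf_mem ⟨P i j, i, j, hj, rfl⟩ hfin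
  rw [← hpmin] at hmem
  obtain ⟨a, b, hab, hpab⟩ := hmem
  exact ⟨hpab ▸ hab, hpab ▸ le_one_of_mem_rowStochastic hP,
    fun a b h => hpmin ▸ csInf_le hfin.bddBelow ⟨a, b, h, rfl⟩⟩

lemma sum_mul_sum_mul_log_neg (hP : P ∈ rowStochastic ℝ ι) [Nonempty ι] {v : ι → ℝ}
    (hv : ∀ i, 0 < v i) {c : Matrix ι ι ℝ} (hc : ∀ i j, 0 < P i j → 0 < c i j ∧ c i j < 1) :
    ∑ i, v i * ∑ j, P i j * Real.log (c i j) < 0 := by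
  refine sum_neg (fun i _ => mul_neg_of_pos_of_neg (hv i) ?_) univ_nonempty
  obtain ⟨j, hj⟩ := exists_pos_of_mem_rowStochastic hP i
  refine sum_neg' (fun k _ => ?_) ⟨j, mem_univ j, mul_neg_of_pos_of_neg hj
    (Real.log_neg (hc i j hj).1 (hc i j hj).2)⟩
  rcases (nonneg_of_mem_rowStochastic hP : 0 ≤ P i k).lt_or_eq with h | h
  · exact mul_nonpos_of_nonneg_of_nonpos h.le (Real.log_nonpos (hc i k h).1.le (hc i k h).2.le)
  · simp [← h]

lemma sum_mul_log_self_eq_zero (hP : P ∈ rowStochastic ℝ ι)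
    (hdet : ∀ a b, 0 < P a b → P a b = 1) (i : ι) : ∑ j, P i j * Real.log (P i j) = 0 :=
  sum_eq_zero fun j _ => by
    rcases (nonneg_of_mem_rowStochastic hP : 0 ≤ P i j).lt_or_eq with h | h
    · simp [hdet i j h]
    · simp [← h]

end Entries

lemma setOf_stopped_eq_empty {N : ℕ} {P : Matrix (Fin N) (Fin N) ℝ}
    (hdet : ∀ a b, 0 < P a b → P a b = 1) {ε : ℝ} (hε : ε ≤ 1) :
    {l | adm P l ∧ ε ≤ pword P l.dropLast ∧ pword P l < ε} = ∅ := by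
  refine Set.eq_empty_of_forall_notMem ?_
  rintro l ⟨hl, -, hlt⟩
  rw [pword_eq_one hdet l hl.2] at hlt
  exact hε.not_gt hlt

theorem stmt10_general {N : ℕ} (P c : Matrix (Fin N) (Fin N) ℝ)
    (hnn : ∀ i j, 0 ≤ P i j) (hrow : ∀ i, ∑ j, P i j = 1)
    (hirr : ∀ i j, ∃ m, 1 ≤ m ∧ 0 < (P ^ m) i j)
    (hc : ∀ i j, 0 < P i j → 0 < c i j ∧ c i j < 1)
    (q : Fin N → ℝ) (hq : ∀ i, 0 < q i) (hq1 : ∑ i, q i = 1)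
    (v : Fin N → ℝ) (hvpos : ∀ i, 0 < v i) (hv1 : ∑ i, v i = 1)
    (hveig : ∀ j, ∑ i, v i * P i j = v j)
    (pmin : ℝ) (hpmin : pmin = sInf {x : ℝ | ∃ i j, 0 < P i j ∧ P i j = x})
    (Λ : ℕ → Set (List (Fin N)))
    (hΛ : ∀ j, Λ j = {l | adm P l ∧
      pmin ^ j ≤ pword P l.dropLast ∧ pword P l < pmin ^ j})
    (t : ℕ → ℝ)
    (ht : ∀ j, t j = (∑ᶠ σ ∈ Λ j, mlist q P σ * Real.log (mlist q P σ)) /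
                     (∑ᶠ σ ∈ Λ j, mlist q P σ * Real.log (pword c σ)))
    (s0 : ℝ)
    (hs0 : s0 = (∑ i, v i * ∑ j, P i j * Real.log (P i j)) /
                (∑ i, v i * ∑ j, P i j * Real.log (c i j))) :
    ∃ C4 : ℝ, ∃ J : ℕ, ∀ j : ℕ, J ≤ j →
      |t j - s0| < C4 / (j : ℝ) := by
  have hP : P ∈ Matrix.rowStochastic ℝ (Fin N) := Matrix.mem_rowStochastic_iff_sum.2 ⟨hnn, hrow⟩
  have hirr' : P.IsIrreducible := (Matrix.isIrreducible_iff_exists_pow_pos hnn).2 hirr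
  have : Nonempty (Fin N) := by
    by_contra h
    simp [not_nonempty_iff.1 h] at hq1
  obtain ⟨hpmin0, hpmin1, hpminP⟩ := sInf_pos_entries hP hpmin
  by_cases hnondet : ∃ a b, 0 < P a b ∧ P a b < 1
  · obtain ⟨a, b, hab, hab1⟩ := hnondet
    have hv : Matrix.vecMul v P = v := funext hveig
    obtain ⟨A, hA⟩ := exists_abs_sum_mlist_mul_log_mlist_sub_le hP hirr' hv hv1 hq
    obtain ⟨B, hB⟩ := exists_abs_sum_mlist_mul_log_pword_sub_le hP hirr' hv hv1 (fun i => (hq i).le)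
      fun i j h => (hc i j h).1
    set μP := ∑ i, v i * ∑ j, P i j * Real.log (P i j)
    set μc := ∑ i, v i * ∑ j, P i j * Real.log (c i j)
    refine ⟨2 * (|μc| * A + |μP| * B) / μc ^ 2 + 1, ⌈2 * B / |μc|⌉₊ + 1, fun j hj => ?_⟩
    obtain ⟨F, hFΛ, hF⟩ := exists_isStoppingSet hP hirr' hab hab1 q (pow_pos hpmin0 j)
      (pow_le_one₀ hpmin0.le hpmin1)
    have hmem : ∀ σ ∈ F, adm P σ ∧ pmin ^ j ≤ pword P σ.dropLast ∧ pword P σ < pmin ^ j :=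
      fun σ hσ => (hFΛ ▸ Finset.mem_coe.2 hσ :)
    rw [ht, hs0, hΛ, ← hFΛ, finsum_mem_coe_finset, finsum_mem_coe_finset]
    exact abs_div_sub_div_lt (hA F hF fun σ hσ => (hmem σ hσ).1)
      (hB F hF fun σ hσ => (hmem σ hσ).1) (sum_mul_sum_mul_log_neg hP hvpos hc).ne
      (hF.natCast_le_expectedSteps hP (fun i => (hq i).le) hq1 hpmin0.le hpmin1 hpminP
        fun σ hσ => ⟨(hmem σ hσ).1, (hmem σ hσ).2.2⟩) hj
  · have hdet : ∀ a b, 0 < P a b → P a b = 1 := fun a b h =>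
      (Matrix.le_one_of_mem_rowStochastic hP).antisymm (not_lt.1 fun h1 => hnondet ⟨a, b, h, h1⟩)
    refine ⟨1, 1, fun j hj => ?_⟩
    simp [ht, hs0, hΛ, setOf_stopped_eq_empty hdet (pow_le_one₀ hpmin0.le hpmin1),
      sum_mul_log_self_eq_zero hP hdet]
    positivity

theorem stmt10 {N : ℕ} (P c : Matrix (Fin N) (Fin N) ℝ)
    (hnn : ∀ i j, 0 ≤ P i j) (hrow : ∀ i, ∑ j, P i j = 1)
    (hirr : ∀ i j, ∃ m, 1 ≤ m ∧ 0 < (P ^ m) i j)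
    (hc : ∀ i j, 0 < P i j → 0 < c i j ∧ c i j < 1)
    (hc0 : ∀ i j, P i j = 0 → c i j = 0)
    (q : Fin N → ℝ) (hq : ∀ i, 0 < q i) (hq1 : ∑ i, q i = 1)
    (v : Fin N → ℝ) (hvpos : ∀ i, 0 < v i) (hv1 : ∑ i, v i = 1)
    (hveig : ∀ j, ∑ i, v i * P i j = v j)
    (pmin : ℝ) (hpmin : pmin = sInf {x : ℝ | ∃ i j, 0 < P i j ∧ P i j = x})
    (Λ : ℕ → Set (List (Fin N)))
    (hΛ : ∀ j, Λ j = {l | adm P l ∧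
      pmin ^ j ≤ pword P l.dropLast ∧ pword P l < pmin ^ j})
    (t : ℕ → ℝ)
    (ht : ∀ j, t j = (∑ᶠ σ ∈ Λ j, mlist q P σ * Real.log (mlist q P σ)) /
                     (∑ᶠ σ ∈ Λ j, mlist q P σ * Real.log (pword c σ)))
    (s0 : ℝ)
    (hs0 : s0 = (∑ i, v i * ∑ j, P i j * Real.log (P i j)) /
                (∑ i, v i * ∑ j, P i j * Real.log (c i j))) :
    ∃ C4 : ℝ, ∃ J : ℕ, ∀ j : ℕ, J ≤ j →
      |t j - s0| < C4 / (j : ℝ) :=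
  stmt10_general P c hnn hrow hirr hc q hq hq1 v hvpos hv1 hveig pmin hpmin Λ hΛ t ht s0 hs0
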